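/- Let V be a finite-dimensional complex vector space, b a bilinear form on V, and t ∈ V ⊗ V an element lying in R(b) ⊗ L(b), where R(b) and L(b) are the right and left radicals of b, such that b(t) = 1 (applying b to the tensor). Then the data (V, b, t) determines a monoidal functor from TL_0(C) to finite-dimensional vector spaces (sending 1 to V, cap to b, cup to t), and conversely every such monoidal functor arises this way: the circle relation holds iff b(t) = 1 and the two zig-zag relations hold iff t ∈ R(b) ⊗ V and t ∈ V ⊗ L(b) respectively. -/
import Mathlib


namespace TLPaper

open TensorProduct

variable {V : Type*} [AddCommGroup V] [Module ℂ V]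

/-- The linear map `V ⊗ V → End(V)` realizing the first zig-zag
`(cup ⊗ 1) ; (1 ⊗ cap)`: on a pure tensor `a ⊗ c` it yields the map
`v ↦ b(c, v) • a`. -/
noncomputable def zigA (b : V →ₗ[ℂ] V →ₗ[ℂ] ℂ) :
    V ⊗[ℂ] V →ₗ[ℂ] (V →ₗ[ℂ] V) :=
  TensorProduct.lift
    (LinearMap.mk₂ ℂ (fun a c => (b c).smulRight a)
      (fun a a' c => by ext v; simp [smul_add])
      (fun r a c => by
        ext v
        simp only [LinearMap.smulRight_apply, LinearMap.smul_apply]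
        rw [smul_comm])
      (fun a c c' => by ext v; simp [add_smul])
      (fun r a c => by ext v; simp [smul_smul]))

/-- The linear map `V ⊗ V → End(V)` realizing the second zig-zag
`(1 ⊗ cup) ; (cap ⊗ 1)`: on a pure tensor `a ⊗ c` it yields the map
`v ↦ b(v, a) • c`. -/
noncomputable def zigB (b : V →ₗ[ℂ] V →ₗ[ℂ] ℂ) :
    V ⊗[ℂ] V →ₗ[ℂ] (V →ₗ[ℂ] V) :=
  TensorProduct.lift
    (LinearMap.mk₂ ℂ (fun a c => (b.flip a).smulRight c)
      (fun a a' c => by ext v; simp [add_smul])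
      (fun r a c => by ext v; simp [smul_smul])
      (fun a c c' => by ext v; simp [smul_add])
      (fun r a c => by
        ext v
        simp only [LinearMap.smulRight_apply, LinearMap.smul_apply]
        rw [smul_comm]))

private lemma zigA_eq (b : V →ₗ[ℂ] V →ₗ[ℂ] ℂ) :
    zigA b = (dualTensorHom ℂ V V) ∘ₗ
      ((TensorProduct.comm ℂ V (Module.Dual ℂ V)).toLinearMap ∘ₗ LinearMap.lTensor V b) := by
  apply TensorProduct.ext'
  intro a c
  ext v
  simp [zigA]

private lemma zigB_eq (b : V →ₗ[ℂ] V →ₗ[ℂ] ℂ) :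
    zigB b = (dualTensorHom ℂ V V) ∘ₗ LinearMap.rTensor V b.flip := by
  apply TensorProduct.ext'
  intro a c
  ext v
  simp [zigB]

private lemma lTensor_ker_iff {M N P : Type*} [AddCommGroup M] [Module ℂ M]
    [AddCommGroup N] [Module ℂ N] [AddCommGroup P] [Module ℂ P]
    (f : N →ₗ[ℂ] P) (t : M ⊗[ℂ] N) :
    LinearMap.lTensor M f t = 0 ↔ t ∈ LinearMap.range (LinearMap.lTensor M (LinearMap.ker f).subtype) := by
  have h := Module.Flat.lTensor_exact M f.exact_subtype_ker_map t
  simpa only [LinearMap.mem_range, Set.mem_range] using h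

private lemma rTensor_ker_iff {M N P : Type*} [AddCommGroup M] [Module ℂ M]
    [AddCommGroup N] [Module ℂ N] [AddCommGroup P] [Module ℂ P]
    (f : N →ₗ[ℂ] P) (t : N ⊗[ℂ] M) :
    LinearMap.rTensor M f t = 0 ↔ t ∈ LinearMap.range (LinearMap.rTensor M (LinearMap.ker f).subtype) := by
  have h := Module.Flat.rTensor_exact M f.exact_subtype_ker_map t
  simpa only [LinearMap.mem_range, Set.mem_range] using h

/-- A triple `(V, b, t)` — with `V` a finite-dimensional complex vector space,
`b` a bilinear form, `t ∈ V ⊗ V` — determines a monoidal functor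
`TL₀(ℂ) → vec` (sending `1 ↦ V`, `cap ↦ b`, `cup ↦ t`), and conversely every
such functor arises this way, because the defining relations of `TL₀(ℂ)`
translate as follows: the first zig-zag relation holds iff `t ∈ V ⊗ L(b)`, the
second iff `t ∈ R(b) ⊗ V` (where `L(b) = ker b` and `R(b) = ker b.flip` are the
left and right radicals), and, given these, the circle relation holds iff
`b(t) = 1`; so the relations altogether hold iff `t ∈ R(b) ⊗ L(b)` and
`b(t) = 1`. -/
theorem fiber_functor_data (W : Type*) [AddCommGroup W] [Module ℂ W]
    [FiniteDimensional ℂ W]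
    (b : W →ₗ[ℂ] W →ₗ[ℂ] ℂ) (t : W ⊗[ℂ] W) :
    (zigA b t = 0 ↔ t ∈ LinearMap.range
        (TensorProduct.map (LinearMap.id : W →ₗ[ℂ] W) (LinearMap.ker b).subtype)) ∧
    (zigB b t = 0 ↔ t ∈ LinearMap.range
        (TensorProduct.map (LinearMap.ker b.flip).subtype (LinearMap.id : W →ₗ[ℂ] W))) ∧
    ((zigA b t = 0 ∧ zigB b t = 0 ∧ TensorProduct.lift b t = 1) ↔
      (t ∈ LinearMap.range
          (TensorProduct.map (LinearMap.ker b.flip).subtype (LinearMap.ker b).subtype) ∧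
        TensorProduct.lift b t = 1)) := by
  classical
  have hA : ∀ s : W ⊗[ℂ] W, zigA b s = 0 ↔ LinearMap.lTensor W b s = 0 := by
    intro s
    rw [zigA_eq]
    constructor
    · intro h
      have h2 : (dualTensorHomEquiv ℂ W W)
          ((TensorProduct.comm ℂ W (Module.Dual ℂ W)) (LinearMap.lTensor W b s)) = 0 := h
      have h3 := (dualTensorHomEquiv ℂ W W).map_eq_zero_iff.mp h2
      simpa using (TensorProduct.comm ℂ W (Module.Dual ℂ W)).map_eq_zero_iff.mp h3
    · intro h
      simp [LinearMap.comp_apply, h]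
  have hB : ∀ s : W ⊗[ℂ] W, zigB b s = 0 ↔ LinearMap.rTensor W b.flip s = 0 := by
    intro s
    rw [zigB_eq]
    constructor
    · intro h
      have h2 : (dualTensorHomEquiv ℂ W W) (LinearMap.rTensor W b.flip s) = 0 := h
      exact (dualTensorHomEquiv ℂ W W).map_eq_zero_iff.mp h2
    · intro h
      simp [LinearMap.comp_apply, h]
  have hlT : LinearMap.lTensor W (LinearMap.ker b).subtype
      = TensorProduct.map (LinearMap.id : W →ₗ[ℂ] W) (LinearMap.ker b).subtype := rfl
  have hrT : LinearMap.rTensor W (LinearMap.ker b.flip).subtype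
      = TensorProduct.map (LinearMap.ker b.flip).subtype (LinearMap.id : W →ₗ[ℂ] W) := rfl
  have part1 : zigA b t = 0 ↔ t ∈ LinearMap.range
      (TensorProduct.map (LinearMap.id : W →ₗ[ℂ] W) (LinearMap.ker b).subtype) := by
    rw [hA, lTensor_ker_iff, hlT]
  have part2 : zigB b t = 0 ↔ t ∈ LinearMap.range
      (TensorProduct.map (LinearMap.ker b.flip).subtype (LinearMap.id : W →ₗ[ℂ] W)) := by
    rw [hB, rTensor_ker_iff, hrT]
  refine ⟨part1, part2, ?_⟩
  constructor
  · rintro ⟨h1, h2, h3⟩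
    refine ⟨?_, h3⟩
    -- from h2 : t ∈ R ⊗ W
    obtain ⟨s, hs⟩ := (rTensor_ker_iff b.flip t).mp ((hB t).mp h2)
    -- s : (ker b.flip) ⊗ W with rTensor subtype s = t
    have h1' : LinearMap.lTensor W b t = 0 := (hA t).mp h1
    have hcomp : LinearMap.lTensor W b (LinearMap.rTensor W (LinearMap.ker b.flip).subtype s)
        = LinearMap.rTensor (Module.Dual ℂ W) (LinearMap.ker b.flip).subtype
            (LinearMap.lTensor (LinearMap.ker b.flip) b s) := by
      rw [← LinearMap.comp_apply, ← LinearMap.comp_apply,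
        LinearMap.lTensor_comp_rTensor, LinearMap.rTensor_comp_lTensor]
    have hz : LinearMap.lTensor (LinearMap.ker b.flip) b s = 0 := by
      apply Module.Flat.rTensor_preserves_injective_linearMap
        (LinearMap.ker b.flip).subtype (Submodule.injective_subtype _)
      rw [← hcomp, hs, h1']
      simp
    obtain ⟨u, hu⟩ := (lTensor_ker_iff b s).mp hz
    refine ⟨u, ?_⟩
    rw [← hs, ← hu, ← LinearMap.comp_apply, LinearMap.rTensor_comp_lTensor]
  · rintro ⟨⟨u, hu⟩, h3⟩
    refine ⟨?_, ?_, h3⟩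
    · rw [part1]
      refine ⟨TensorProduct.map (LinearMap.ker b.flip).subtype LinearMap.id u, ?_⟩
      rw [← LinearMap.comp_apply, ← TensorProduct.map_comp]
      simpa using hu
    · rw [part2]
      refine ⟨TensorProduct.map LinearMap.id (LinearMap.ker b).subtype u, ?_⟩
      rw [← LinearMap.comp_apply, ← TensorProduct.map_comp]
      simpa using hu


end TLPaper
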